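/- arXiv:1905.07031 — 2 statements merged into one kernel-verified Lean document; each statement's English description precedes it below -/
import Mathlib

section
/- Let A be a square matrix with nonnegative real entries. Then A has a nonnegative real eigenvalue λ which is greater than or equal to the absolute value of every other eigenvalue of A (the Frobenius–Perron eigenvalue). -/
open Polynomial Filter

attribute [local instance] Matrix.linftyOpNormedRing Matrix.linftyOpNormedAlgebra

namespace FPaux

noncomputable section

variable {n : ℕ}

instance : CompleteSpace (Matrix (Fin n) (Fin n) ℂ) :=
  FiniteDimensional.complete ℂ (Matrix (Fin n) (Fin n) ℂ)

lemma entry_nnnorm_le (M : Matrix (Fin n) (Fin n) ℂ) (i j : Fin n) : ‖M i j‖₊ ≤ ‖M‖₊ := by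
  rw [Matrix.linfty_opNNNorm_def]
  exact le_trans (Finset.single_le_sum (f := fun j' => ‖M i j'‖₊) (fun _ _ => zero_le)
    (Finset.mem_univ j)) (Finset.le_sup (f := fun i => ∑ j : Fin n, ‖M i j‖₊) (Finset.mem_univ i))

lemma entry_norm_le (M : Matrix (Fin n) (Fin n) ℂ) (i j : Fin n) : ‖M i j‖ ≤ ‖M‖ :=
  entry_nnnorm_le M i j

lemma norm_le_norm_of_entry_le {C D : Matrix (Fin n) (Fin n) ℂ}
    (h : ∀ i j, ‖C i j‖ ≤ ‖D i j‖) : ‖C‖ ≤ ‖D‖ := by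
  have h' : ∀ i j, ‖C i j‖₊ ≤ ‖D i j‖₊ := h
  have : ‖C‖₊ ≤ ‖D‖₊ := by
    rw [Matrix.linfty_opNNNorm_def, Matrix.linfty_opNNNorm_def]
    exact Finset.sup_le fun i _ =>
      le_trans (Finset.sum_le_sum fun j _ => h' i j) (Finset.le_sup (f := fun i => ∑ j : Fin n, ‖D i j‖₊) (Finset.mem_univ i))
  exact this

/-- The entry-evaluation continuous linear map. -/
def entryCLM (i j : Fin n) : Matrix (Fin n) (Fin n) ℂ →L[ℂ] ℂ :=
  LinearMap.mkContinuous
    { toFun := fun M => M i j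
      map_add' := fun _ _ => rfl
      map_smul' := fun _ _ => rfl } 1
    (fun M => by rw [one_mul]; exact entry_norm_le M i j)

@[simp] lemma entryCLM_apply (i j : Fin n) (M : Matrix (Fin n) (Fin n) ℂ) :
    entryCLM i j M = M i j := rfl

lemma eval_charpoly (M : Matrix (Fin n) (Fin n) ℂ) (μ : ℂ) :
    M.charpoly.eval μ = (algebraMap ℂ (Matrix (Fin n) (Fin n) ℂ) μ - M).det := by
  rw [Matrix.charpoly, ← Polynomial.coe_evalRingHom, RingHom.map_det]
  congr 1
  ext i j
  rw [RingHom.mapMatrix_apply]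
  by_cases h : i = j
  · subst h
    simp [Matrix.charmatrix_apply_eq, Matrix.algebraMap_eq_diagonal, Matrix.sub_apply]
  · simp [Matrix.charmatrix_apply_ne _ _ _ h, Matrix.algebraMap_eq_diagonal,
      Matrix.sub_apply, Matrix.diagonal_apply_ne _ h]

lemma mem_spectrum_iff_root (M : Matrix (Fin n) (Fin n) ℂ) (μ : ℂ) :
    μ ∈ spectrum ℂ M ↔ M.charpoly.IsRoot μ := by
  rw [spectrum.mem_iff, Matrix.isUnit_iff_isUnit_det, isUnit_iff_ne_zero, not_ne_iff]
  show _ ↔ M.charpoly.eval μ = 0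
  rw [eval_charpoly]

end
end FPaux
-- chunk 2: geometric bound and Neumann series
open scoped ENNReal NNReal

namespace FPaux
noncomputable section
variable {n : ℕ}

lemma exists_pow_norm_le (B : Matrix (Fin n) (Fin n) ℂ) {c : ℝ≥0}
    (hc : spectralRadius ℂ B < (c : ℝ≥0∞)) :
    ∃ M : ℝ, 0 < M ∧ ∀ k : ℕ, ‖B ^ k‖ ≤ M * (c : ℝ) ^ k := by
  have hc0 : 0 < c := by
    rcases eq_or_lt_of_le (zero_le : 0 ≤ c) with h | h
    · exfalso; rw [← h] at hc; simpa using hc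
    · exact h
  have hls := spectrum.limsup_pow_nnnorm_pow_one_div_le_spectralRadius B
  have hev : ∀ᶠ k : ℕ in atTop, (‖B ^ k‖₊ : ℝ≥0∞) ^ (1 / (k : ℝ)) < (c : ℝ≥0∞) :=
    Filter.eventually_lt_of_limsup_lt (lt_of_le_of_lt hls hc)
  have hev' : ∀ᶠ k : ℕ in atTop, ‖B ^ k‖ ≤ (c : ℝ) ^ k := by
    filter_upwards [hev, Filter.eventually_ge_atTop 1] with k hk hk1
    have hkne : (k : ℝ) ≠ 0 := by positivity
    have h1 := ENNReal.rpow_lt_rpow hk (by positivity : (0:ℝ) < (k : ℝ))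
    rw [← ENNReal.rpow_mul, one_div, inv_mul_cancel₀ hkne, ENNReal.rpow_one,
      ENNReal.rpow_natCast, ← ENNReal.coe_pow, ENNReal.coe_lt_coe] at h1
    calc ‖B ^ k‖ = ((‖B ^ k‖₊ : ℝ≥0) : ℝ) := rfl
    _ ≤ ((c ^ k : ℝ≥0) : ℝ) := by exact_mod_cast h1.le
    _ = (c : ℝ) ^ k := by push_cast; ring
  obtain ⟨K, hK⟩ := Filter.eventually_atTop.mp hev'
  refine ⟨1 + ∑ k ∈ Finset.range K, ‖B ^ k‖ / (c : ℝ) ^ k, by positivity, fun k => ?_⟩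
  have hck : (0 : ℝ) < (c : ℝ) ^ k := by positivity
  rcases le_or_gt K k with h | h
  · calc ‖B ^ k‖ ≤ (c : ℝ) ^ k := hK k h
    _ ≤ (1 + ∑ k ∈ Finset.range K, ‖B ^ k‖ / (c : ℝ) ^ k) * (c : ℝ) ^ k := by
        have : (1:ℝ) ≤ 1 + ∑ k ∈ Finset.range K, ‖B ^ k‖ / (c : ℝ) ^ k := by
          have : (0:ℝ) ≤ ∑ k ∈ Finset.range K, ‖B ^ k‖ / (c : ℝ) ^ k :=
            Finset.sum_nonneg fun _ _ => by positivity
          linarith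
        nlinarith
  · rw [← div_le_iff₀ hck]
    have hmem : ‖B ^ k‖ / (c : ℝ) ^ k ≤ ∑ j ∈ Finset.range K, ‖B ^ j‖ / (c : ℝ) ^ j :=
      Finset.single_le_sum (f := fun j => ‖B ^ j‖ / (c : ℝ) ^ j)
        (fun _ _ => by positivity) (Finset.mem_range.mpr h)
    linarith

lemma neumann (B : Matrix (Fin n) (Fin n) ℂ) {z : ℂ}
    (hz : spectralRadius ℂ B < (‖z‖₊ : ℝ≥0∞)) :
    ∃ u : (Matrix (Fin n) (Fin n) ℂ)ˣ,
      (u : Matrix (Fin n) (Fin n) ℂ) = algebraMap ℂ _ z - B ∧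
      (↑u⁻¹ : Matrix (Fin n) (Fin n) ℂ) = ∑' k : ℕ, (z⁻¹) ^ (k + 1) • B ^ k ∧
      Summable (fun k : ℕ => ‖(z⁻¹) ^ (k + 1) • B ^ k‖) := by
  obtain ⟨c, hc1, hc2⟩ := ENNReal.lt_iff_exists_nnreal_btwn.mp hz
  have hcz : (c : ℝ) < ‖z‖ := by exact_mod_cast hc2
  have hz0 : (0 : ℝ) < ‖z‖ := lt_of_le_of_lt c.coe_nonneg hcz
  have hzne : z ≠ 0 := by simpa using hz0.ne'
  obtain ⟨M, hM0, hM⟩ := exists_pow_norm_le B hc1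
  -- summability of norms
  have hsum : Summable (fun k : ℕ => ‖(z⁻¹) ^ (k + 1) • B ^ k‖) := by
    have hgeo : Summable (fun k : ℕ => (M / ‖z‖) * ((c : ℝ) / ‖z‖) ^ k) :=
      (summable_geometric_of_lt_one (by positivity)
        (by rw [div_lt_one hz0]; exact hcz)).mul_left _
    refine Summable.of_nonneg_of_le (fun k => norm_nonneg _) (fun k => ?_) hgeo
    rw [norm_smul, norm_pow, norm_inv]
    calc ‖z‖⁻¹ ^ (k + 1) * ‖B ^ k‖ ≤ ‖z‖⁻¹ ^ (k + 1) * (M * (c:ℝ) ^ k) := by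
          have := hM k
          have h1 : (0:ℝ) ≤ ‖z‖⁻¹ ^ (k+1) := by positivity
          nlinarith
    _ = M / ‖z‖ * ((c : ℝ) / ‖z‖) ^ k := by
          rw [pow_succ]
          field_simp
          ring
  have hsumM : Summable (fun k : ℕ => (z⁻¹) ^ (k + 1) • B ^ k) := hsum.of_norm
  set S := ∑' k : ℕ, (z⁻¹) ^ (k + 1) • B ^ k with hSdef
  set a := algebraMap ℂ (Matrix (Fin n) (Fin n) ℂ) z with ha
  have haX : ∀ X : Matrix (Fin n) (Fin n) ℂ, a * X = z • X :=
    fun X => (Algebra.smul_def z X).symm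
  have hpow : ∀ N : ℕ, (z⁻¹) ^ (N + 1) * z = (z⁻¹) ^ N := fun N => by
    rw [pow_succ, mul_assoc, inv_mul_cancel₀ hzne, mul_one]
  -- partial sums identity
  have key : ∀ N : ℕ, (a - B) * (∑ k ∈ Finset.range N, (z⁻¹) ^ (k + 1) • B ^ k)
      = 1 - (z⁻¹) ^ N • B ^ N := by
    intro N
    induction N with
    | zero => simp
    | succ N ih =>
      rw [Finset.sum_range_succ, mul_add, ih]
      have hstep : (a - B) * ((z⁻¹) ^ (N + 1) • B ^ N)
          = (z⁻¹) ^ N • B ^ N - (z⁻¹) ^ (N + 1) • B ^ (N + 1) := by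
        rw [sub_mul, mul_smul_comm, mul_smul_comm, haX, smul_smul, hpow, ← pow_succ']
      rw [hstep]
      abel
  have htend1 : Filter.Tendsto
      (fun N => (a - B) * (∑ k ∈ Finset.range N, (z⁻¹) ^ (k + 1) • B ^ k))
      atTop (nhds ((a - B) * S)) :=
    (hsumM.hasSum.tendsto_sum_nat).const_mul _
  have htend0 : Filter.Tendsto (fun N : ℕ => (z⁻¹) ^ N • B ^ N) atTop (nhds 0) := by
    have h1 : Filter.Tendsto (fun N : ℕ => (z⁻¹) ^ (N + 1) • B ^ N) atTop (nhds 0) :=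
      hsumM.tendsto_atTop_zero
    have h2 := h1.const_smul z
    rw [smul_zero] at h2
    refine h2.congr fun N => ?_
    rw [smul_smul, pow_succ', ← mul_assoc, mul_inv_cancel₀ hzne, one_mul]
  have htend2 : Filter.Tendsto (fun N : ℕ => 1 - (z⁻¹) ^ N • B ^ N) atTop (nhds (1 - 0)) :=
    tendsto_const_nhds.sub htend0
  have hmul1 : (a - B) * S = 1 := by
    have := tendsto_nhds_unique (htend1.congr fun N => key N) htend2
    simpa using this
  have hcomm : ∀ k : ℕ, ((z⁻¹) ^ (k + 1) • B ^ k) * (a - B)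
      = (a - B) * ((z⁻¹) ^ (k + 1) • B ^ k) := by
    intro k
    have hC : Commute (a - B) (B ^ k) :=
      (Algebra.commute_algebraMap_left z (B ^ k)).sub_left
        ((Commute.refl B).pow_right k)
    exact (hC.smul_right ((z⁻¹) ^ (k + 1))).eq.symm
  have hmul2 : S * (a - B) = 1 := by
    calc S * (a - B) = ∑' k : ℕ, ((z⁻¹) ^ (k + 1) • B ^ k) * (a - B) :=
          (hsumM.tsum_mul_right _).symm
    _ = ∑' k : ℕ, (a - B) * ((z⁻¹) ^ (k + 1) • B ^ k) := tsum_congr hcomm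
    _ = (a - B) * S := hsumM.tsum_mul_left _
    _ = 1 := hmul1
  exact ⟨⟨a - B, S, hmul1, hmul2⟩, rfl, rfl, hsum⟩

end
end FPaux
-- chunk 3: main theorem
namespace FPaux
noncomputable section
variable {n : ℕ}

lemma tsum_entry {f : ℕ → Matrix (Fin n) (Fin n) ℂ} (hf : Summable f) (i j : Fin n) :
    (∑' k, f k) i j = ∑' k, f k i j := by
  simpa using (entryCLM (n := n) i j).map_tsum hf

end
end FPaux

open Polynomial Filter FPaux
open scoped ENNReal NNReal

/-- **Frobenius–Perron theorem.** A square matrix with nonnegative real entries has a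
nonnegative real eigenvalue `λ` which is greater than or equal to the absolute value of
every (complex) eigenvalue. -/
theorem frobenius_perron {n : ℕ} (hn : 0 < n)
    (A : Matrix (Fin n) (Fin n) ℝ) (hA : ∀ i j, 0 ≤ A i j) :
    ∃ lam : ℝ, 0 ≤ lam ∧
      (Matrix.charpoly (A.map (Complex.ofReal : ℝ → ℂ))).IsRoot (lam : ℂ) ∧
      ∀ μ : ℂ, (Matrix.charpoly (A.map (Complex.ofReal : ℝ → ℂ))).IsRoot μ →
        ‖μ‖ ≤ lam := by
  haveI : Nonempty (Fin n) := ⟨⟨0, hn⟩⟩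
  set B : Matrix (Fin n) (Fin n) ℂ := A.map (Complex.ofReal : ℝ → ℂ) with hBdef
  haveI : Nontrivial (Matrix (Fin n) (Fin n) ℂ) := by
    refine nontrivial_of_ne 1 0 fun h => one_ne_zero (α := ℂ) ?_
    have := congrFun (congrFun h ⟨0, hn⟩) ⟨0, hn⟩
    simpa [Matrix.one_apply_eq] using this
  obtain ⟨μ₀, hμ₀mem, hμ₀rad⟩ := spectrum.exists_nnnorm_eq_spectralRadius B
  set r : ℝ := ‖μ₀‖ with hrdef
  have hr0 : 0 ≤ r := norm_nonneg μ₀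
  have hApow : ∀ (k : ℕ) (i j : Fin n), 0 ≤ (A ^ k) i j := by
    intro k
    induction k with
    | zero => intro i j; by_cases h : i = j <;> simp [pow_zero, Matrix.one_apply, h]
    | succ k ih =>
      intro i j
      rw [pow_succ, Matrix.mul_apply]
      exact Finset.sum_nonneg fun l _ => mul_nonneg (ih i l) (hA l j)
  have hBpow : ∀ k : ℕ, B ^ k = (A ^ k).map (Complex.ofReal : ℝ → ℂ) := by
    intro k
    induction k with
    | zero =>
      ext i j
      by_cases h : i = j <;> simp [Matrix.one_apply, h, Matrix.map_apply]
    | succ k ih =>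
      ext i j
      simp only [pow_succ, ih, Matrix.mul_apply, Matrix.map_apply]
      push_cast
      rfl
  have hBentry : ∀ (k : ℕ) (i j : Fin n), (B ^ k) i j = (((A ^ k) i j : ℝ) : ℂ) := by
    intro k i j; rw [hBpow k]; rfl
  refine ⟨r, hr0, ?_, ?_⟩
  · -- (r : ℂ) is a root of the charpoly
    rcases eq_or_lt_of_le hr0 with hr | hrpos
    · -- r = 0
      have hμ0 : μ₀ = 0 := by
        have : ‖μ₀‖ = 0 := hr.symm
        simpa using this
      have hroot := (mem_spectrum_iff_root B μ₀).mp hμ₀mem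
      rw [hμ0] at hroot
      rw [← hr]
      simpa using hroot
    · by_contra hroot
      have hnotmem : (r : ℂ) ∉ spectrum ℂ B := fun hmem =>
        hroot ((mem_spectrum_iff_root B _).mp hmem)
      have hUr : IsUnit (algebraMap ℂ (Matrix (Fin n) (Fin n) ℂ) (r : ℂ) - B) :=
        spectrum.notMem_iff.mp hnotmem
      have hcont : ContinuousAt
          (fun t : ℝ => Ring.inverse (algebraMap ℂ (Matrix (Fin n) (Fin n) ℂ) (t : ℂ) - B)) r := by
        have h1 : ContinuousAt
            (fun t : ℝ => algebraMap ℂ (Matrix (Fin n) (Fin n) ℂ) (t : ℂ) - B) r :=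
          (((continuous_algebraMap ℂ _).comp Complex.continuous_ofReal).sub
            continuous_const).continuousAt
        have h2 : ContinuousAt Ring.inverse
            (algebraMap ℂ (Matrix (Fin n) (Fin n) ℂ) (r : ℂ) - B) := by
          have := NormedRing.inverse_continuousAt hUr.unit
          rwa [IsUnit.unit_spec] at this
        exact ContinuousAt.comp
          (f := fun t : ℝ => algebraMap ℂ (Matrix (Fin n) (Fin n) ℂ) (t : ℂ) - B)
          (g := Ring.inverse) h2 h1
      set C : ℝ := ‖Ring.inverse (algebraMap ℂ (Matrix (Fin n) (Fin n) ℂ) (r : ℂ) - B)‖ + 1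
        with hCdef
      have hCpos : 0 < C := by positivity
      have hev : ∀ᶠ t : ℝ in nhds r,
          ‖Ring.inverse (algebraMap ℂ (Matrix (Fin n) (Fin n) ℂ) (t : ℂ) - B)‖ < C :=
        hcont.norm.eventually_lt_const (lt_add_one _)
      obtain ⟨δ, hδpos, hδ⟩ := Metric.eventually_nhds_iff.mp hev
      have hclaim : ∀ t : ℝ, r < t → dist t r < δ → C⁻¹ ≤ t - r := by
        intro t hrt htδ
        have ht0 : 0 < t := lt_trans hrpos hrt
        set z : ℂ := ((t / r : ℝ) : ℂ) * μ₀ with hz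
        have habsz : ‖z‖ = t := by
          rw [hz, norm_mul, Complex.norm_real, Real.norm_eq_abs,
            abs_of_pos (by positivity), ← hrdef]
          field_simp
        have habst : ‖((t : ℝ) : ℂ)‖ = t := by
          rw [Complex.norm_real, Real.norm_eq_abs, abs_of_pos ht0]
        have hnormr : ‖μ₀‖ = r := by rw [← hrdef]
        have hradz : spectralRadius ℂ B < (‖z‖₊ : ℝ≥0∞) := by
          rw [← hμ₀rad]
          apply ENNReal.coe_lt_coe.mpr
          have h : ‖μ₀‖ < ‖z‖ := by rw [habsz, hnormr]; exact hrt
          exact_mod_cast h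
        have hradt : spectralRadius ℂ B < (‖((t : ℝ) : ℂ)‖₊ : ℝ≥0∞) := by
          rw [← hμ₀rad]
          apply ENNReal.coe_lt_coe.mpr
          have h : ‖μ₀‖ < ‖((t : ℝ) : ℂ)‖ := by rw [habst, hnormr]; exact hrt
          exact_mod_cast h
        obtain ⟨uz, huzval, huzinv, hsumz⟩ := neumann B hradz
        obtain ⟨ut, hutval, hutinv, hsumt⟩ := neumann B hradt
        have hsz : Summable (fun k : ℕ => (z⁻¹) ^ (k + 1) • B ^ k) := hsumz.of_norm
        have hst : Summable (fun k : ℕ => ((((t : ℝ) : ℂ))⁻¹) ^ (k + 1) • B ^ k) := hsumt.of_norm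
        have hentry : ∀ i j : Fin n,
            ‖(↑uz⁻¹ : Matrix (Fin n) (Fin n) ℂ) i j‖ ≤
              ‖(↑ut⁻¹ : Matrix (Fin n) (Fin n) ℂ) i j‖ := by
          intro i j
          set g : ℕ → ℝ := fun k => (t⁻¹) ^ (k + 1) * (A ^ k) i j with hg
          have hg0 : ∀ k, 0 ≤ g k := fun k => by
            have := hApow k i j
            positivity
          have hterm_z : ∀ k : ℕ, ‖(z⁻¹) ^ (k + 1) * (B ^ k) i j‖ = g k := by
            intro k
            rw [norm_mul, norm_pow, norm_inv, habsz, hBentry k i j, Complex.norm_real,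
              Real.norm_eq_abs, abs_of_nonneg (hApow k i j)]
          have hterm_t : ∀ k : ℕ, ‖((((t : ℝ) : ℂ))⁻¹) ^ (k + 1) * (B ^ k) i j‖ = g k := by
            intro k
            rw [norm_mul, norm_pow, norm_inv, habst, hBentry k i j, Complex.norm_real,
              Real.norm_eq_abs, abs_of_nonneg (hApow k i j)]
          have hentry_le : ∀ (w : ℂ) (k : ℕ),
              ‖(w⁻¹) ^ (k + 1) * (B ^ k) i j‖ ≤ ‖(w⁻¹) ^ (k + 1) • B ^ k‖ := by
            intro w k
            have : (w⁻¹) ^ (k + 1) * (B ^ k) i j = ((w⁻¹) ^ (k + 1) • B ^ k) i j := by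
              simp [Matrix.smul_apply]
            rw [this]
            exact entry_norm_le _ i j
          have hgsum : Summable g := by
            refine Summable.of_nonneg_of_le hg0 (fun k => ?_) hsumz
            rw [← hterm_z k]
            exact hentry_le z k
          have hez : (↑uz⁻¹ : Matrix (Fin n) (Fin n) ℂ) i j
              = ∑' k : ℕ, (z⁻¹) ^ (k + 1) * (B ^ k) i j := by
            rw [huzinv, tsum_entry hsz i j]
            exact tsum_congr fun k => by simp [Matrix.smul_apply]
          have het : (↑ut⁻¹ : Matrix (Fin n) (Fin n) ℂ) i j = ((∑' k : ℕ, g k : ℝ) : ℂ) := by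
            rw [hutinv, tsum_entry hst i j, Complex.ofReal_tsum]
            refine tsum_congr fun k => ?_
            rw [Matrix.smul_apply, smul_eq_mul, hBentry k i j]
            simp only [hg]
            push_cast
            ring
          have h1 : ‖(↑uz⁻¹ : Matrix (Fin n) (Fin n) ℂ) i j‖ ≤ ∑' k : ℕ, g k := by
            rw [hez]
            have hnorms : Summable fun k : ℕ => ‖(z⁻¹) ^ (k + 1) * (B ^ k) i j‖ := by
              refine Summable.of_nonneg_of_le (fun k => norm_nonneg _)
                (fun k => hentry_le z k) hsumz
            calc ‖∑' k : ℕ, (z⁻¹) ^ (k + 1) * (B ^ k) i j‖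
                ≤ ∑' k : ℕ, ‖(z⁻¹) ^ (k + 1) * (B ^ k) i j‖ := norm_tsum_le_tsum_norm hnorms
            _ = ∑' k : ℕ, g k := tsum_congr hterm_z
          have h2 : ‖(↑ut⁻¹ : Matrix (Fin n) (Fin n) ℂ) i j‖ = ∑' k : ℕ, g k := by
            rw [het, Complex.norm_real, Real.norm_eq_abs,
              abs_of_nonneg (tsum_nonneg hg0)]
          rw [h2]
          exact h1
        have hlenorm : ‖(↑uz⁻¹ : Matrix (Fin n) (Fin n) ℂ)‖ ≤
            ‖(↑ut⁻¹ : Matrix (Fin n) (Fin n) ℂ)‖ := norm_le_norm_of_entry_le hentry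
        have hFt : Ring.inverse (algebraMap ℂ (Matrix (Fin n) (Fin n) ℂ) ((t : ℝ) : ℂ) - B)
            = (↑ut⁻¹ : Matrix (Fin n) (Fin n) ℂ) := by
          rw [← hutval, Ring.inverse_unit]
        have hCt : ‖(↑ut⁻¹ : Matrix (Fin n) (Fin n) ℂ)‖ < C := by
          have := hδ (y := t) (by rwa [Real.dist_eq] at htδ ⊢)
          rwa [hFt] at this
        have hnotunit : ¬ IsUnit (algebraMap ℂ (Matrix (Fin n) (Fin n) ℂ) μ₀ - B) :=
          spectrum.mem_iff.mp hμ₀mem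
        have hfar : ¬ (‖(algebraMap ℂ (Matrix (Fin n) (Fin n) ℂ) μ₀ - B) - ↑uz‖
            < ‖(↑uz⁻¹ : Matrix (Fin n) (Fin n) ℂ)‖⁻¹) := by
          intro h
          exact hnotunit ⟨Units.ofNearby uz _ h, rfl⟩
        push_neg at hfar
        have hdist : ‖(algebraMap ℂ (Matrix (Fin n) (Fin n) ℂ) μ₀ - B) - ↑uz‖ = t - r := by
          rw [huzval, sub_sub_sub_cancel_right, ← map_sub, norm_algebraMap']
          have hμz : μ₀ - z = (((r - t) / r : ℝ) : ℂ) * μ₀ := by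
            rw [hz]
            have hrne : ((r : ℝ) : ℂ) ≠ 0 := by
              simpa using (ne_of_gt hrpos)
            push_cast
            field_simp
          rw [hμz, norm_mul, Complex.norm_real, Real.norm_eq_abs, hnormr,
            abs_of_neg (by apply div_neg_of_neg_of_pos <;> linarith)]
          field_simp
          ring
        have hinvpos : 0 < ‖(↑uz⁻¹ : Matrix (Fin n) (Fin n) ℂ)‖ := Units.norm_pos uz⁻¹
        have hstep : C⁻¹ ≤ ‖(↑uz⁻¹ : Matrix (Fin n) (Fin n) ℂ)‖⁻¹ :=
          inv_anti₀ hinvpos (hlenorm.trans hCt.le)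
        calc C⁻¹ ≤ ‖(↑uz⁻¹ : Matrix (Fin n) (Fin n) ℂ)‖⁻¹ := hstep
        _ ≤ ‖(algebraMap ℂ (Matrix (Fin n) (Fin n) ℂ) μ₀ - B) - ↑uz‖ := hfar
        _ = t - r := hdist
      -- derive the contradiction
      have hCinv : 0 < C⁻¹ := by positivity
      set t : ℝ := r + min (δ / 2) (C⁻¹ / 2) with htdef
      have hmin : 0 < min (δ / 2) (C⁻¹ / 2) := by positivity
      have h1 : r < t := by rw [htdef]; linarith
      have h2 : dist t r < δ := by
        rw [Real.dist_eq, htdef, add_sub_cancel_left, abs_of_pos hmin]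
        have := min_le_left (δ / 2) (C⁻¹ / 2)
        linarith
      have h3 := hclaim t h1 h2
      rw [htdef, add_sub_cancel_left] at h3
      have h4 := h3.trans (min_le_right _ _)
      linarith
  · -- domination
    intro μ hμ
    have hmem : μ ∈ spectrum ℂ B := (mem_spectrum_iff_root B μ).mpr hμ
    have hle : (‖μ‖₊ : ℝ≥0∞) ≤ spectralRadius ℂ B := le_iSup₂ (α := ℝ≥0∞) μ hmem
    rw [← hμ₀rad] at hle
    have h2 : ‖μ‖ ≤ ‖μ₀‖ := by exact_mod_cast hle
    exact h2
end

section
/- Let R be a Noetherian commutative positively graded ring with R₀ a field and M a nonzero finitely generated graded R-module whose Krull dimension (of R/Ann(M)) is at least 1. Then there exists a homogeneous element ζ ∈ R of positive degree such that multiplication by ζ : M_i → M_{i+deg ζ} is injective for all i ≫ 0. -/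
set_option linter.unusedSectionVars false

open DirectSum

/-! ### Finiteness of associated primes -/

section AssFinite

variable {R M : Type*} [CommRing R] [AddCommGroup M] [Module R M]

theorem BIKO_ass_subset_union (N : Submodule R M) :
    associatedPrimes R M ⊆ associatedPrimes R N ∪ associatedPrimes R (M ⧸ N) :=
  associatedPrimes.subset_union_of_exact N.injective_subtype (LinearMap.exact_subtype_mkQ N)

theorem BIKO_associatedPrimes_finite (R M : Type*) [CommRing R] [IsNoetherianRing R]
    [AddCommGroup M] [Module R M] [Module.Finite R M] :
    (associatedPrimes R M).Finite :=
  associatedPrimes.finite R M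

end AssFinite

/-! ### Graded lemmas -/

section Graded

variable {k R M : Type*} [Field k]
    [CommRing R] [Algebra k R]
    [AddCommGroup M] [Module R M] [Module k M] [IsScalarTower k R M]
    (𝒜 : ℕ → Submodule k R) [GradedAlgebra 𝒜]
    (ℳ : ℕ → Submodule k M) [SetLike.GradedSMul 𝒜 ℳ] [DirectSum.Decomposition ℳ]

/-- Homogeneous `x` acting on the components of `u`. -/
theorem BIKO_hom_smul_decompose {e : ℕ} {x : R} (hx : x ∈ 𝒜 e) (u : M) (c : ℕ) :
    (DirectSum.decompose ℳ (x • u) (e + c) : M) = x • (DirectSum.decompose ℳ u c : M) := by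
  induction u using DirectSum.Decomposition.inductionOn ℳ with
  | zero => simp
  | @homogeneous j m =>
    have hsm : x • (m : M) ∈ ℳ (e + j) := SetLike.GradedSMul.smul_mem hx m.2
    by_cases hj : j = c
    · subst hj
      rw [DirectSum.decompose_of_mem_same ℳ hsm,
        DirectSum.decompose_of_mem_same ℳ m.2]
    · rw [DirectSum.decompose_of_mem_ne ℳ hsm
        (show e + j ≠ e + c by omega),
        DirectSum.decompose_of_mem_ne ℳ m.2 hj, smul_zero]
  | add a b ha hb =>
    rw [smul_add, DirectSum.decompose_add, DirectSum.add_apply, DirectSum.decompose_add,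
      DirectSum.add_apply]
    push_cast
    rw [ha, hb, smul_add]

/-- Component of `r • u` for homogeneous `u`. -/
theorem BIKO_smul_hom_decompose (r : R) {c : ℕ} {u : M} (hu : u ∈ ℳ c) {i : ℕ} (hci : c ≤ i) :
    (DirectSum.decompose ℳ (r • u) i : M) = (DirectSum.decompose 𝒜 r (i - c) : R) • u := by
  induction r using DirectSum.Decomposition.inductionOn 𝒜 with
  | zero => simp
  | @homogeneous e x =>
    by_cases h : e = i - c
    · have hec : e + c = i := by omega
      have hsm : (x : R) • u ∈ ℳ (e + c) := SetLike.GradedSMul.smul_mem x.2 hu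
      have hmem : (x : R) • u ∈ ℳ i := hec ▸ hsm
      rw [DirectSum.decompose_of_mem_same ℳ hmem,
        DirectSum.decompose_of_mem_same 𝒜 (h ▸ x.2)]
    · have hsm : (x : R) • u ∈ ℳ (e + c) := SetLike.GradedSMul.smul_mem x.2 hu
      rw [DirectSum.decompose_of_mem_ne ℳ hsm
        (show e + c ≠ i by omega),
        DirectSum.decompose_of_mem_ne 𝒜 x.2 h, zero_smul]
  | add a b ha hb =>
    rw [add_smul, DirectSum.decompose_add, DirectSum.add_apply, DirectSum.decompose_add,
      DirectSum.add_apply]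
    push_cast
    rw [ha, hb, add_smul]

/-- A homogeneous element killing `u` kills all its components. -/
theorem BIKO_kill {e : ℕ} {x : R} (hx : x ∈ 𝒜 e) {u : M} (hxu : x • u = 0) (c : ℕ) :
    x • (DirectSum.decompose ℳ u c : M) = 0 := by
  rw [← BIKO_hom_smul_decompose 𝒜 ℳ hx u c, hxu]
  simp

/-- Homogeneous prime avoidance. -/
theorem BIKO_avoid (I : Ideal R) :
    ∀ s : Finset (Ideal R), (∀ q ∈ s, q.IsPrime) → (∀ q ∈ s, q.IsHomogeneous 𝒜) →
    (∀ q ∈ s, ∃ d x, 0 < d ∧ x ∈ 𝒜 d ∧ x ∈ I ∧ x ∉ q) →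
    ∃ d x, 0 < d ∧ x ∈ 𝒜 d ∧ x ∈ I ∧ ∀ q ∈ s, x ∉ q := by
  classical
  intro s
  induction s using Finset.strongInduction with
  | _ s ih =>
    intro hp hh hb
    by_cases hincl : ∃ q ∈ s, ∃ q' ∈ s, q ≠ q' ∧ q ≤ q'
    · obtain ⟨q, hq, q', hq', hne, hle⟩ := hincl
      obtain ⟨d, x, hd, hxd, hxI, hxq⟩ :=
        ih (s.erase q) (Finset.erase_ssubset hq)
          (fun r hr => hp r (Finset.mem_of_mem_erase hr))
          (fun r hr => hh r (Finset.mem_of_mem_erase hr))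
          (fun r hr => hb r (Finset.mem_of_mem_erase hr))
      refine ⟨d, x, hd, hxd, hxI, ?_⟩
      intro r hr
      by_cases hrq : r = q
      · subst hrq
        intro hmem
        exact hxq q' (Finset.mem_erase.mpr ⟨hne.symm, hq'⟩) (hle hmem)
      · exact hxq r (Finset.mem_erase.mpr ⟨hrq, hr⟩)
    · push_neg at hincl
      rcases Finset.eq_empty_or_nonempty s with rfl | hsne
      · exact ⟨1, 0, one_pos, (𝒜 1).zero_mem, I.zero_mem, by simp⟩
      -- skolemize the choice of b
      have hb' : ∀ q : Ideal R, ∃ d x, q ∈ s → 0 < d ∧ x ∈ 𝒜 d ∧ x ∈ I ∧ x ∉ q := by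
        intro q
        by_cases hq : q ∈ s
        · obtain ⟨d, x, h⟩ := hb q hq
          exact ⟨d, x, fun _ => h⟩
        · exact ⟨1, 0, fun h => absurd h hq⟩
      choose db b hbspec using hb'
      -- skolemize the choice of c : for q' ≠ q both in s, a homogeneous element of q' not in q
      have hc' : ∀ q' q : Ideal R, ∃ e c, q' ∈ s → q ∈ s → q' ≠ q →
          c ∈ 𝒜 e ∧ c ∈ q' ∧ c ∉ q := by
        intro q' q
        by_cases hqs : q' ∈ s ∧ q ∈ s ∧ q' ≠ q
        · obtain ⟨hq's, hqs, hne⟩ := hqs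
          have hnle : ¬ q' ≤ q := hincl q' hq's q hqs hne
          rw [SetLike.not_le_iff_exists] at hnle
          obtain ⟨z, hzq', hzq⟩ := hnle
          by_cases hall : ∀ e ∈ (DirectSum.decompose 𝒜 z).support,
              (DirectSum.decompose 𝒜 z e : R) ∈ q
          · exfalso
            apply hzq
            rw [← DirectSum.sum_support_decompose 𝒜 z]
            exact Ideal.sum_mem q hall
          · push_neg at hall
            obtain ⟨e, _, henq⟩ := hall
            exact ⟨e, DirectSum.decompose 𝒜 z e, fun _ _ _ =>
              ⟨(DirectSum.decompose 𝒜 z e).2, hh q' hq's e hzq', henq⟩⟩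
        · exact ⟨0, 0, by tauto⟩
      choose dc c hcspec using hc'
      -- the building blocks
      set x : Ideal R → R := fun q => b q * ∏ q' ∈ s.erase q, c q' q with hxdef
      set Dg : Ideal R → ℕ := fun q => db q + ∑ q' ∈ s.erase q, dc q' q with hDdef
      have hxmem : ∀ q ∈ s, x q ∈ 𝒜 (Dg q) :=
        fun q hq => SetLike.mul_mem_graded (hbspec q hq).2.1
          (SetLike.prod_mem_graded 𝒜 _ _ (fun q' hq' =>
            (hcspec q' q (Finset.mem_of_mem_erase hq') hq (Finset.mem_erase.mp hq').1).1))
      have hDpos : ∀ q ∈ s, 0 < Dg q := fun q hq =>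
        lt_of_lt_of_le (hbspec q hq).1 (Nat.le_add_right _ _)
      have hxI : ∀ q ∈ s, x q ∈ I := fun q hq =>
        Ideal.mul_mem_right _ _ (hbspec q hq).2.2.1
      have hxnq : ∀ q ∈ s, x q ∉ q := by
        intro q hq hmem
        rcases (hp q hq).mem_or_mem hmem with h1 | h2
        · exact (hbspec q hq).2.2.2 h1
        · rw [Ideal.IsPrime.prod_mem_iff (hp := hp q hq)] at h2
          obtain ⟨q', hq', hcq⟩ := h2
          exact (hcspec q' q (Finset.mem_of_mem_erase hq') hq
            (Finset.mem_erase.mp hq').1).2.2 hcq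
      have hxq' : ∀ q ∈ s, ∀ q' ∈ s, q ≠ q' → x q' ∈ q := by
        intro q hq q' hq' hne
        have hqe : q ∈ s.erase q' := Finset.mem_erase.mpr ⟨hne, hq⟩
        rw [hxdef]
        refine Ideal.mul_mem_left _ _ ?_
        rw [← Finset.prod_erase_mul _ _ hqe]
        exact Ideal.mul_mem_left _ _
          (hcspec q q' (Finset.mem_of_mem_erase hqe) hq' (Finset.mem_erase.mp hqe).1).2.1
      -- the common degree and exponents
      set E : Ideal R → ℕ := fun q => ∏ q' ∈ s.erase q, Dg q' with hEdef
      set DD : ℕ := ∏ q' ∈ s, Dg q' with hDD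
      have hDDpos : 0 < DD := Finset.prod_pos hDpos
      have hEq : ∀ q ∈ s, E q * Dg q = DD := fun q hq => Finset.prod_erase_mul _ _ hq
      have hEpos : ∀ q ∈ s, 0 < E q := fun q hq =>
        Finset.prod_pos (fun q' hq' => hDpos q' (Finset.mem_of_mem_erase hq'))
      refine ⟨DD, ∑ q ∈ s, (x q) ^ (E q), hDDpos, ?_, ?_, ?_⟩
      · apply Submodule.sum_mem
        intro q hq
        have := SetLike.pow_mem_graded (E q) (hxmem q hq)
        rwa [smul_eq_mul, hEq q hq] at this
      · exact Ideal.sum_mem I (fun q hq => I.pow_mem_of_mem (hxI q hq) _ (hEpos q hq))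
      · intro q hq hmem
        rw [← Finset.sum_erase_add _ _ hq] at hmem
        have hrest : ∑ q' ∈ s.erase q, (x q') ^ (E q') ∈ q :=
          Ideal.sum_mem q (fun q' hq' =>
            q.pow_mem_of_mem (hxq' q hq q' (Finset.mem_of_mem_erase hq')
              (Finset.mem_erase.mp hq').1.symm) _ (hEpos q' (Finset.mem_of_mem_erase hq')))
        have hlast : (x q) ^ (E q) ∈ q := by
          have := q.sub_mem hmem hrest
          simpa using this
        exact hxnq q hq ((hp q hq).mem_of_pow_mem _ hlast)

end Graded

/-- Let `R` be a Noetherian positively graded commutative ring with degree-zero part a field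
`k`, and `M` a nonzero finitely generated graded `R`-module with `Krull dim (R/Ann M) ≥ 1`.
Then there is a homogeneous element `ζ` of positive degree such that multiplication by `ζ`
is injective on `M_i` for all `i ≫ 0`. -/
theorem exists_eventually_regular_homogeneous {k R M : Type*} [Field k]
    [CommRing R] [Algebra k R] [IsNoetherianRing R]
    [AddCommGroup M] [Module R M] [Module k M] [IsScalarTower k R M] [Module.Finite R M]
    (𝒜 : ℕ → Submodule k R) [GradedAlgebra 𝒜]
    (ℳ : ℕ → Submodule k M) [SetLike.GradedSMul 𝒜 ℳ] [DirectSum.Decomposition ℳ]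
    (hM : Nontrivial M)
    (hdim : 1 ≤ ringKrullDim (R ⧸ Module.annihilator R M)) :
    ∃ (d : ℕ) (ζ : R), 0 < d ∧ ζ ∈ 𝒜 d ∧
      ∃ N : ℕ, ∀ i ≥ N, ∀ m ∈ ℳ i, ζ • m = 0 → m = 0 := by
  classical
  clear hM hdim
  -- the irrelevant ideal
  set S : Set R := {x : R | ∃ d, 0 < d ∧ x ∈ 𝒜 d} with hS
  set I : Ideal R := Ideal.span S with hI
  have hShom : ∀ x ∈ S, SetLike.IsHomogeneousElem 𝒜 x := fun x hx => ⟨hx.choose, hx.choose_spec.2⟩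
  have hIhom : I.IsHomogeneous 𝒜 := Ideal.homogeneous_span 𝒜 S hShom
  have hIpowhom : ∀ n : ℕ, (I ^ n).IsHomogeneous 𝒜 := by
    intro n
    induction n with
    | zero => rw [pow_zero, Ideal.one_eq_top]; exact Ideal.IsHomogeneous.top 𝒜
    | succ n ihn => rw [pow_succ]; exact Ideal.IsHomogeneous.mul ihn hIhom
  have hmemI : ∀ {e : ℕ} {x : R}, 0 < e → x ∈ 𝒜 e → x ∈ I :=
    fun he hx => Ideal.subset_span ⟨_, he, hx⟩
  -- a finite homogeneous generating set for `I`
  obtain ⟨sgen, hsgen⟩ := (IsNoetherian.noetherian I : I.FG)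
  have hsub : ∀ g ∈ sgen, ∃ T : Finset R, ↑T ⊆ S ∧ g ∈ Submodule.span R (↑T : Set R) := by
    intro g hg
    have hgI : g ∈ I := by rw [← hsgen]; exact Ideal.subset_span hg
    rw [hI] at hgI
    exact Submodule.mem_span_finite_of_mem_span hgI
  choose T hTsub hTmem using hsub
  set G : Finset R := sgen.attach.biUnion (fun g => T g.1 g.2) with hG
  have hGS : ↑G ⊆ S := by
    intro x hx
    obtain ⟨g, _, hxg⟩ := Finset.mem_biUnion.mp hx
    exact hTsub g.1 g.2 hxg
  have hGspan : Ideal.span ↑G = I := by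
    apply le_antisymm
    · rw [Ideal.span_le]
      exact fun x hx => Ideal.subset_span (hGS hx)
    · rw [← hsgen, Submodule.span_le]
      intro g hg
      refine Submodule.span_mono ?_ (hTmem g hg)
      intro y hy
      exact Finset.mem_coe.mpr (Finset.mem_biUnion.mpr ⟨⟨g, hg⟩, Finset.mem_attach _ _, hy⟩)
  -- degree data for the generators
  have hGdeg' : ∀ g : R, ∃ d, g ∈ G → 0 < d ∧ g ∈ 𝒜 d := by
    intro g
    by_cases hg : g ∈ G
    · obtain ⟨d, hd⟩ := hGS hg
      exact ⟨d, fun _ => hd⟩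
    · exact ⟨1, fun h => absurd h hg⟩
  choose dg hdg using hGdeg'
  set Δ : ℕ := max 1 (G.sup dg) with hΔ
  have hΔ1 : 1 ≤ Δ := le_max_left _ _
  have hdgΔ : ∀ g ∈ G, dg g ≤ Δ := fun g hg => le_trans (Finset.le_sup hg) (le_max_right _ _)
  -- high-degree homogeneous elements lie in high powers of `I`
  have hPOW : ∀ n e : ℕ, n * Δ ≤ e → ∀ x ∈ 𝒜 e, x ∈ I ^ n := by
    intro n
    induction n with
    | zero => intro e _ x _; rw [pow_zero, Ideal.one_eq_top]; exact Submodule.mem_top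
    | succ n ihn =>
      intro e he x hx
      have hsm : (n + 1) * Δ = n * Δ + Δ := by ring
      have he1 : 0 < e := by omega
      have hxI : x ∈ Ideal.span (↑G : Set R) := by rw [hGspan]; exact hmemI he1 hx
      obtain ⟨f, -, hf⟩ := Submodule.mem_span_finset.mp hxI
      have hxe : x = ∑ g ∈ G, (DirectSum.decompose 𝒜 (f g) (e - dg g) : R) • g := by
        conv_lhs => rw [← DirectSum.decompose_of_mem_same 𝒜 hx, ← hf]
        rw [DirectSum.decompose_sum, DFinsupp.finset_sum_apply, AddSubmonoidClass.coe_finset_sum]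
        refine Finset.sum_congr rfl (fun g hg => ?_)
        exact BIKO_smul_hom_decompose 𝒜 𝒜 (f g) (hdg g hg).2
          (le_trans (hdgΔ g hg) (by omega))
      rw [hxe]
      apply Ideal.sum_mem
      intro g hg
      have hcoef : (DirectSum.decompose 𝒜 (f g) (e - dg g) : R) ∈ I ^ n := by
        refine ihn (e - dg g) ?_ _ (DirectSum.decompose 𝒜 (f g) (e - dg g)).2
        have := hdgΔ g hg
        omega
      have hgI : g ∈ I := hmemI (hdg g hg).1 (hdg g hg).2
      rw [smul_eq_mul, pow_succ]
      exact Ideal.mul_mem_mul hcoef hgI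
  -- the `I`-power-torsion submodule
  set L : Submodule R M :=
    { carrier := {m : M | ∃ n : ℕ, ∀ x ∈ I ^ n, x • m = 0}
      add_mem' := by
        rintro a b ⟨n1, h1⟩ ⟨n2, h2⟩
        refine ⟨max n1 n2, fun x hx => ?_⟩
        rw [smul_add, h1 x (Ideal.pow_le_pow_right (le_max_left n1 n2) hx),
          h2 x (Ideal.pow_le_pow_right (le_max_right n1 n2) hx), add_zero]
      zero_mem' := ⟨0, fun x _ => smul_zero x⟩
      smul_mem' := by
        rintro r a ⟨n, h⟩
        refine ⟨n, fun x hx => ?_⟩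
        rw [smul_smul, mul_comm, ← smul_smul, h x hx, smul_zero] } with hL
  obtain ⟨U, hU⟩ := (IsNoetherian.noetherian L : L.FG)
  have hUL : ∀ u ∈ U, u ∈ L := fun u hu => hU ▸ Submodule.subset_span hu
  -- a uniform torsion exponent for `L`
  have hex : ∀ u : M, ∃ n : ℕ, u ∈ U → ∀ x ∈ I ^ n, x • u = 0 := by
    intro u
    by_cases hu : u ∈ U
    · obtain ⟨n, hn⟩ := hUL u hu
      exact ⟨n, fun _ => hn⟩
    · exact ⟨0, fun h => absurd h hu⟩
  choose nf hnf using hex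
  set n₀ : ℕ := U.sup nf with hn₀def
  have hn₀U : ∀ u ∈ U, ∀ x ∈ I ^ n₀, x • u = 0 := fun u hu x hx =>
    hnf u hu x (Ideal.pow_le_pow_right (Finset.le_sup hu) hx)
  have hn₀ : ∀ m ∈ L, ∀ x ∈ I ^ n₀, x • m = 0 := by
    have hle : L ≤ Submodule.torsionBySet R M ↑(I ^ n₀) := by
      rw [← hU, Submodule.span_le]
      intro u hu
      rw [SetLike.mem_coe, Submodule.mem_torsionBySet_iff]
      exact fun a => hn₀U u hu a a.2
    intro m hm x hx
    have hmem := hle hm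
    rw [Submodule.mem_torsionBySet_iff] at hmem
    exact hmem ⟨x, hx⟩
  -- components of elements of `L` are in `L`
  have hLcomp : ∀ m ∈ L, ∀ c : ℕ, (DirectSum.decompose ℳ m c : M) ∈ L := by
    rintro m ⟨n, hn⟩ c
    refine ⟨n, fun x hx => ?_⟩
    have hxe : ∀ e : ℕ, (DirectSum.decompose 𝒜 x e : R) • (DirectSum.decompose ℳ m c : M) = 0 :=
      fun e => BIKO_kill 𝒜 ℳ (DirectSum.decompose 𝒜 x e).2 (hn _ (hIpowhom n e hx)) c
    calc x • (DirectSum.decompose ℳ m c : M)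
        = (∑ e ∈ (DirectSum.decompose 𝒜 x).support, (DirectSum.decompose 𝒜 x e : R)) •
            (DirectSum.decompose ℳ m c : M) := by rw [DirectSum.sum_support_decompose]
      _ = 0 := by
          rw [Finset.sum_smul]
          exact Finset.sum_eq_zero (fun e _ => hxe e)
  -- a degree bound for the generators of `L`
  set Db : ℕ := U.sup (fun u => (DirectSum.decompose ℳ u).support.sup id) with hDb
  have hDbU : ∀ u ∈ U, ∀ c : ℕ, Db < c → DirectSum.decompose ℳ u c = 0 := by
    intro u hu c hc
    by_contra h0
    have hcs : c ∈ (DirectSum.decompose ℳ u).support := DFinsupp.mem_support_iff.mpr h0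
    have : c ≤ Db := le_trans (Finset.le_sup (f := id) hcs)
      (Finset.le_sup (f := fun u => (DirectSum.decompose ℳ u).support.sup id) hu)
    omega
  -- high-degree homogeneous elements of `L` vanish
  set N : ℕ := Db + n₀ * Δ + 1 with hN
  have hLvanish : ∀ i : ℕ, N ≤ i → ∀ m ∈ L, m ∈ ℳ i → m = 0 := by
    intro i hi m hmL hmi
    have hmL' : m ∈ Submodule.span R (↑U : Set M) := hU.symm ▸ hmL
    obtain ⟨f, -, hf⟩ := Submodule.mem_span_finset.mp hmL'
    rw [← DirectSum.decompose_of_mem_same ℳ hmi, ← hf, DirectSum.decompose_sum,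
      DFinsupp.finset_sum_apply, AddSubmonoidClass.coe_finset_sum]
    apply Finset.sum_eq_zero
    intro u hu
    have hrep : f u • u = ∑ c ∈ (DirectSum.decompose ℳ u).support,
        f u • (DirectSum.decompose ℳ u c : M) := by
      rw [← Finset.smul_sum, DirectSum.sum_support_decompose]
    rw [hrep, DirectSum.decompose_sum, DFinsupp.finset_sum_apply,
      AddSubmonoidClass.coe_finset_sum]
    apply Finset.sum_eq_zero
    intro c hc
    have hcDb : c ≤ Db := by
      by_contra hcd
      push_neg at hcd
      exact (DFinsupp.mem_support_iff.mp hc) (hDbU u hu c hcd)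
    rw [BIKO_smul_hom_decompose 𝒜 ℳ (f u) (DirectSum.decompose ℳ u c).2
      (show c ≤ i by omega)]
    refine hn₀ _ (hLcomp u (hUL u hu) c) _ ?_
    refine hPOW n₀ (i - c) (by omega) _ (DirectSum.decompose 𝒜 (f u) (i - c)).2
  -- the quotient module
  haveI : Module.Finite R (M ⧸ L) :=
    Module.Finite.of_surjective L.mkQ (Submodule.mkQ_surjective L)
  -- no associated prime of the quotient contains `I`
  have hass : ∀ p ∈ associatedPrimes R (M ⧸ L), ¬ I ≤ p := by
    rintro p hp hIp
    obtain ⟨hpp, xb, hxb⟩ := isAssociatedPrime_iff.mp hp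
    obtain ⟨x, rfl⟩ := Submodule.Quotient.mk_surjective L xb
    have hxnz : (Submodule.Quotient.mk x : M ⧸ L) ≠ 0 := by
      intro h0
      apply hpp.ne_top
      rw [hxb, h0]
      simp
    have hbx : ∀ b ∈ I, b • x ∈ L := by
      intro b hb
      have h1 : b • (Submodule.Quotient.mk x : M ⧸ L) = 0 := by
        rw [← Submodule.mem_bot R, ← Submodule.mem_colon_singleton, ← hxb]
        exact hIp hb
      rwa [← Submodule.Quotient.mk_smul, Submodule.Quotient.mk_eq_zero] at h1
    have hxL : x ∈ L := by
      refine ⟨n₀ + 1, fun z hz => ?_⟩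
      have hle : I ^ (n₀ + 1) ≤ (Submodule.span R {x}).annihilator := by
        rw [pow_succ, Ideal.mul_le]
        intro a ha bb hbb
        rw [Submodule.mem_annihilator_span_singleton, mul_smul]
        exact hn₀ _ (hbx bb hbb) a ha
      have := hle hz
      rwa [Submodule.mem_annihilator_span_singleton] at this
    exact hxnz ((Submodule.Quotient.mk_eq_zero L).mpr hxL)
  -- prime avoidance on the homogeneous cores of the associated primes
  have hfin : (associatedPrimes R (M ⧸ L)).Finite := BIKO_associatedPrimes_finite R (M ⧸ L)
  set Q : Finset (Ideal R) :=
    hfin.toFinset.image (fun p => (Ideal.homogeneousCore 𝒜 p).toIdeal) with hQ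
  have hQspec : ∀ q ∈ Q, q.IsPrime ∧ q.IsHomogeneous 𝒜 ∧
      ∃ d x, 0 < d ∧ x ∈ 𝒜 d ∧ x ∈ I ∧ x ∉ q := by
    intro q hq
    obtain ⟨p, hp, rfl⟩ := Finset.mem_image.mp hq
    rw [Set.Finite.mem_toFinset] at hp
    refine ⟨hp.isPrime.homogeneousCore, (Ideal.homogeneousCore 𝒜 p).isHomogeneous, ?_⟩
    have hnle : ¬ I ≤ (Ideal.homogeneousCore 𝒜 p).toIdeal := by
      intro hle
      exact hass p hp (le_trans hle (Ideal.toIdeal_homogeneousCore_le 𝒜 p))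
    by_cases hSq : ∀ s ∈ S, s ∈ (Ideal.homogeneousCore 𝒜 p).toIdeal
    · exact absurd (Ideal.span_le.mpr (fun s hs => hSq s hs)) hnle
    · push_neg at hSq
      obtain ⟨s, hsS, hsq⟩ := hSq
      obtain ⟨dd, hdd, hs𝒜⟩ := hsS
      exact ⟨dd, s, hdd, hs𝒜, hmemI hdd hs𝒜, hsq⟩
  obtain ⟨d, ζ, hd, hζ𝒜, hζI, hζQ⟩ := BIKO_avoid 𝒜 I Q (fun q hq => (hQspec q hq).1)
    (fun q hq => (hQspec q hq).2.1) (fun q hq => (hQspec q hq).2.2)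
  refine ⟨d, ζ, hd, hζ𝒜, N, ?_⟩
  intro i hi m hmi hζm
  have hmL : m ∈ L := by
    by_contra hmL
    have hnz : (Submodule.Quotient.mk m : M ⧸ L) ≠ 0 :=
      fun h => hmL ((Submodule.Quotient.mk_eq_zero L).mp h)
    obtain ⟨p, hpass, hple⟩ :=
      exists_le_isAssociatedPrime_of_isNoetherianRing R (Submodule.Quotient.mk m : M ⧸ L) hnz
    have hζp : ζ ∈ p := by
      refine hple ?_
      rw [Submodule.mem_colon_singleton, Submodule.mem_bot R, ← Submodule.Quotient.mk_smul, hζm,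
        Submodule.Quotient.mk_zero]
    have hcore : ζ ∈ (Ideal.homogeneousCore 𝒜 p).toIdeal :=
      Ideal.mem_homogeneousCore_of_homogeneous_of_mem ⟨d, hζ𝒜⟩ hζp
    exact hζQ _ (Finset.mem_image.mpr ⟨p, (Set.Finite.mem_toFinset hfin).mpr hpass, rfl⟩) hcore
  exact hLvanish i hi m hmL hmi
end
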